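/- arXiv:1410.5935 — 3 statements merged into one kernel-verified Lean document; each statement's English description precedes it below -/
import Mathlib

section
/- Let H be a complex inner product space of finite dimension n ≥ 1, let ε ∈ {−1, 1}, and let C : H → H be an antilinear conjugation, i.e. C is additive, C(αx) = conj(α)·C(x), ⟨Cx, Cy⟩ = ⟨y, x⟩ for all x, y ∈ H and α ∈ ℂ, and C² = ε·id. Let T : H → H be an invertible linear map whose adjoint satisfies T* = C∘T∘C. Then there exist an orthonormal basis f₁, …, fₙ of H and nonnegative real numbers λ₁, …, λₙ such that T(fₖ) = λₖ · C(fₖ) for k = 1, …, n. -/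
/-!
The map `A = ε • C ∘ T` is antilinear, and `T* = C T C` makes it symmetric in the sense
`⟪A x, y⟫ = ⟪A y, x⟫`. Its square is linear, and at a unit eigenvector `v` of `A ∘ A` the
eigenvalue is `⟪A v, A v⟫ = l ^ 2` with `l = ‖A v‖`. Antilinearity lets one rotate the phase:
either `A v + l v` or `i v` is an eigenvector of `A` itself with eigenvalue `l ≥ 0`. The orthogonal
complement of such an eigenvector is `A`-invariant, so induction on the dimension gives an
orthonormal basis with `A fₖ = λₖ fₖ`, and applying `C` turns this into `T fₖ = λₖ C fₖ`.
-/

open scoped InnerProductSpace ComplexConjugate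

namespace OrthonormalBasis

variable {𝕜 E : Type*} [RCLike 𝕜] [NormedAddCommGroup E] [InnerProductSpace 𝕜 E]
  [FiniteDimensional 𝕜 E] {n : ℕ} {f : E}

noncomputable def consOrthogonal (hf : ‖f‖ = 1) (b : OrthonormalBasis (Fin n) 𝕜 (𝕜 ∙ f)ᗮ) :
    OrthonormalBasis (Fin (n + 1)) 𝕜 E :=
  have hon : Orthonormal 𝕜 (Matrix.vecCons f fun k => (b k : E)) :=
    orthonormal_vecCons_iff.mpr
      ⟨hf, fun k => Submodule.mem_orthogonal_singleton_iff_inner_right.mp (b k).2,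
        b.orthonormal.comp_linearIsometry (𝕜 ∙ f)ᗮ.subtypeₗᵢ⟩
  have hf0 : f ≠ 0 := norm_ne_zero_iff.mp (by simp [hf])
  have hcard : Fintype.card (Fin (n + 1)) = Module.finrank 𝕜 E := by
    rw [← (𝕜 ∙ f).finrank_add_finrank_orthogonal, finrank_span_singleton hf0,
      Module.finrank_eq_card_basis b.toBasis]
    simp [add_comm]
  OrthonormalBasis.mk hon (hon.linearIndependent.span_eq_top_of_card_eq_finrank hcard).ge

theorem coe_consOrthogonal (hf : ‖f‖ = 1) (b : OrthonormalBasis (Fin n) 𝕜 (𝕜 ∙ f)ᗮ) :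
    ⇑(consOrthogonal hf b) = Matrix.vecCons f fun k => (b k : E) := by
  rw [consOrthogonal, OrthonormalBasis.coe_mk]

end OrthonormalBasis

namespace LinearMap

variable {E : Type*} [NormedAddCommGroup E] [InnerProductSpace ℂ E]

/-- The analogue of `LinearMap.IsSymmetric` for antilinear maps, `⟪A x, y⟫ = conj ⟪x, A y⟫`. -/
def IsConjSymmetric (A : E →ₗ⋆[ℂ] E) : Prop :=
  ∀ x y, ⟪A x, y⟫_ℂ = ⟪A y, x⟫_ℂ

theorem isConjSymmetric_comp [FiniteDimensional ℂ E] {C : E →ₗ⋆[ℂ] E}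
    (hCiso : ∀ x y, ⟪C x, C y⟫_ℂ = ⟪y, x⟫_ℂ) (hC : Function.Surjective C) {T : E →ₗ[ℂ] E}
    (hT : ∀ x, adjoint T x = C (T (C x))) : (C ∘ₛₗ T).IsConjSymmetric := by
  intro x y
  obtain ⟨z, rfl⟩ := hC y
  rw [comp_apply, comp_apply, hCiso, ← adjoint_inner_left, hT]

theorem exists_apply_eq_smul_of_apply_apply_eq (A : E →ₗ⋆[ℂ] E) {v : E} (hv : v ≠ 0) {l : ℝ}
    (h : A (A v) = ((l ^ 2 : ℝ) : ℂ) • v) : ∃ f ≠ 0, A f = (l : ℂ) • f := by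
  by_cases hw : A v + (l : ℂ) • v = 0
  · refine ⟨Complex.I • v, smul_ne_zero Complex.I_ne_zero hv, ?_⟩
    rw [map_smulₛₗ, Complex.conj_I, eq_neg_of_add_eq_zero_left hw, smul_neg, smul_comm,
      neg_smul, smul_neg, neg_neg]
  · refine ⟨_, hw, ?_⟩
    rw [map_add, map_smulₛₗ, Complex.conj_ofReal, h, smul_add]
    push_cast
    module

namespace IsConjSymmetric

variable {A : E →ₗ⋆[ℂ] E}

theorem smul (hA : A.IsConjSymmetric) (c : ℂ) : (c • A).IsConjSymmetric := by
  intro x y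
  simp only [smul_apply, inner_smul_left, hA x y]

theorem restrict (hA : A.IsConjSymmetric) {K : Submodule ℂ E} (hK : ∀ x ∈ K, A x ∈ K) :
    (A.restrict hK).IsConjSymmetric :=
  fun x y => hA x y

theorem exists_apply_apply_eq [FiniteDimensional ℂ E] [Nontrivial E] (hA : A.IsConjSymmetric) :
    ∃ v : E, ‖v‖ = 1 ∧ A (A v) = ((‖A v‖ ^ 2 : ℝ) : ℂ) • v := by
  obtain ⟨c, hc⟩ := Module.End.exists_eigenvalue (A ∘ₛₗ A)
  obtain ⟨w, hw⟩ := hc.exists_hasEigenvector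
  set v : E := ((‖w‖⁻¹ : ℝ) : ℂ) • w
  have hv1 : ‖v‖ = 1 := by simp [v, norm_smul, hw.2]
  have hAAv : A (A v) = c • v := by
    have : A (A w) = c • w := hw.apply_eq_smul
    simp only [v, map_smulₛₗ, Complex.conj_ofReal, this, smul_comm c]
  refine ⟨v, hv1, ?_⟩
  have hc : conj c = ((‖A v‖ ^ 2 : ℝ) : ℂ) := by
    have := hA (A v) v
    rw [hAAv, inner_smul_left, inner_self_eq_norm_sq_to_K, hv1, inner_self_eq_norm_sq_to_K] at this
    simpa using this
  rw [hAAv, ← Complex.conj_conj c, hc, Complex.conj_ofReal]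

theorem exists_norm_eq_one_apply_eq_smul [FiniteDimensional ℂ E] [Nontrivial E]
    (hA : A.IsConjSymmetric) : ∃ f : E, ‖f‖ = 1 ∧ ∃ l : ℝ, 0 ≤ l ∧ A f = (l : ℂ) • f := by
  obtain ⟨v, hv1, hAAv⟩ := hA.exists_apply_apply_eq
  obtain ⟨f, hf0, hAf⟩ :=
    exists_apply_eq_smul_of_apply_apply_eq A (norm_ne_zero_iff.mp (by simp [hv1])) hAAv
  refine ⟨((‖f‖⁻¹ : ℝ) : ℂ) • f, by simp [norm_smul, hf0], ‖A v‖, norm_nonneg _, ?_⟩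
  rw [map_smulₛₗ, Complex.conj_ofReal, hAf, smul_comm]

theorem mapsTo_orthogonal_span_singleton (hA : A.IsConjSymmetric) {f : E} {l : ℝ}
    (hAf : A f = (l : ℂ) • f) : ∀ x ∈ (ℂ ∙ f)ᗮ, A x ∈ (ℂ ∙ f)ᗮ := by
  intro x hx
  rw [Submodule.mem_orthogonal_singleton_iff_inner_right] at hx
  rw [Submodule.mem_orthogonal_singleton_iff_inner_left, hA, hAf, inner_smul_left, hx, mul_zero]

theorem exists_orthonormalBasis_apply_eq_smul [FiniteDimensional ℂ E] (hA : A.IsConjSymmetric)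
    (n : ℕ) (hn : Module.finrank ℂ E = n) :
    ∃ (b : OrthonormalBasis (Fin n) ℂ E) (lam : Fin n → ℝ),
      (∀ k, 0 ≤ lam k) ∧ ∀ k, A (b k) = (lam k : ℂ) • b k := by
  induction n generalizing E with
  | zero =>
    exact ⟨(stdOrthonormalBasis ℂ E).reindex (finCongr hn), 0, fun _ => le_rfl, fun k => k.elim0⟩
  | succ n ih =>
    have := Module.nontrivial_of_finrank_eq_succ hn
    have : Fact (Module.finrank ℂ E = n + 1) := ⟨hn⟩
    obtain ⟨f, hf, l, hl, hAf⟩ := hA.exists_norm_eq_one_apply_eq_smul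
    have hK := hA.mapsTo_orthogonal_span_singleton hAf
    obtain ⟨b, lam, hlam, hb⟩ := ih (hA.restrict hK)
      (Submodule.finrank_orthogonal_span_singleton (norm_ne_zero_iff.mp (by simp [hf])))
    refine ⟨.consOrthogonal hf b, Fin.cons l lam, Fin.cases hl hlam, Fin.cases ?_ fun k => ?_⟩
    · simpa [OrthonormalBasis.coe_consOrthogonal] using hAf
    · simpa [OrthonormalBasis.coe_consOrthogonal] using congrArg Subtype.val (hb k)

end IsConjSymmetric

end LinearMap

theorem stmt_16_general {H : Type*} [NormedAddCommGroup H] [InnerProductSpace ℂ H]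
    [FiniteDimensional ℂ H] (n : ℕ) (hdim : Module.finrank ℂ H = n)
    (ε : ℂ) (hε : ε = 1 ∨ ε = -1)
    (C : H → H)
    (hCadd : ∀ x y : H, C (x + y) = C x + C y)
    (hCsmul : ∀ (a : ℂ) (x : H), C (a • x) = (conj a) • C x)
    (hCiso : ∀ x y : H, ⟪C x, C y⟫_ℂ = ⟪y, x⟫_ℂ)
    (hCsq : ∀ x : H, C (C x) = ε • x)
    (T : H →ₗ[ℂ] H)
    (hTadj : ∀ x : H, LinearMap.adjoint T x = C (T (C x))) :
    ∃ (b : OrthonormalBasis (Fin n) ℂ H) (lam : Fin n → ℝ),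
      (∀ k, 0 ≤ lam k) ∧ ∀ k, T (b k) = (lam k : ℂ) • C (b k) := by
  have hCinv : ∀ x, C (ε • C x) = x := by
    have : conj ε * ε = 1 := by rcases hε with rfl | rfl <;> norm_num
    intro x
    rw [hCsmul, hCsq, smul_smul, this, one_smul]
  let Cₗ : H →ₗ⋆[ℂ] H := ⟨⟨C, hCadd⟩, hCsmul⟩
  have hA : (ε • Cₗ ∘ₛₗ T).IsConjSymmetric :=
    (LinearMap.isConjSymmetric_comp hCiso (fun x => ⟨_, hCinv x⟩) hTadj).smul ε
  obtain ⟨b, lam, hlam, hb⟩ := hA.exists_orthonormalBasis_apply_eq_smul n hdim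
  refine ⟨b, lam, hlam, fun k => ?_⟩
  calc T (b k) = C (ε • C (T (b k))) := (hCinv _).symm
    _ = C ((lam k : ℂ) • b k) := congrArg C (hb k)
    _ = (lam k : ℂ) • C (b k) := by rw [hCsmul, Complex.conj_ofReal]

/-- skew eigenfunctions: an orthonormal basis with
T fₖ = λₖ · C fₖ, λₖ ≥ 0 (Thm. on skew eigenfunctions, part 2). -/
theorem stmt_16 {H : Type*} [NormedAddCommGroup H] [InnerProductSpace ℂ H]
    [FiniteDimensional ℂ H] (n : ℕ) (hn : 1 ≤ n) (hdim : Module.finrank ℂ H = n)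
    (ε : ℂ) (hε : ε = 1 ∨ ε = -1)
    (C : H → H)
    (hCadd : ∀ x y : H, C (x + y) = C x + C y)
    (hCsmul : ∀ (a : ℂ) (x : H), C (a • x) = (conj a) • C x)
    (hCiso : ∀ x y : H, ⟪C x, C y⟫_ℂ = ⟪y, x⟫_ℂ)
    (hCsq : ∀ x : H, C (C x) = ε • x)
    (T : H →ₗ[ℂ] H) (hTinv : Function.Bijective T)
    (hTadj : ∀ x : H, LinearMap.adjoint T x = C (T (C x))) :
    ∃ (b : OrthonormalBasis (Fin n) ℂ H) (lam : Fin n → ℝ),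
      (∀ k, 0 ≤ lam k) ∧ ∀ k, T (b k) = (lam k : ℂ) • C (b k) :=
  stmt_16_general n hdim ε hε C hCadd hCsmul hCiso hCsq T hTadj
end

section
/- Let q be a monic complex polynomial of even degree d ≥ 2 and let n ≥ 1. Then there exist complex polynomials f₀, …, fₙ of degree at most n, forming a basis of the space of polynomials of degree at most n, and nonnegative real numbers λ₀, …, λₙ, such that ⟨fᵢ, fⱼ⟩_n = δ_{ij} (orthonormality in the Fischer inner product) and [fᵢ∘q, fⱼ∘q]_{nd} = λᵢ·δ_{ij} for all i, j ∈ {0,…,n}. -/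
open Polynomial

/-- The apolarity form `[f,g]_m`. -/
noncomputable def apol (m : ℕ) (f g : Polynomial ℂ) : ℂ :=
  ∑ k ∈ Finset.range (m + 1),
    (-1 : ℂ) ^ k * ((m.choose k : ℂ))⁻¹ * f.coeff k * g.coeff (m - k)

/-- The symmetrization `Sym_N(f)` of a polynomial, as a function on `ι → ℂ`
with `N = card ι`. -/
noncomputable def symFun {ι : Type*} [Fintype ι] (f : Polynomial ℂ) (y : ι → ℂ) : ℂ :=
  ∑ k ∈ Finset.range (Fintype.card ι + 1),
    (((Fintype.card ι).choose k : ℂ))⁻¹ * f.coeff k *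
      MvPolynomial.eval y (MvPolynomial.esymm ι ℂ k)

/-- A circular domain: an open or closed disk or half-plane, or a complement thereof. -/
def IsCircularDomain (D : Set ℂ) : Prop :=
  ∃ (α γ : ℝ) (β : ℂ),
    D = {z : ℂ | α * Complex.normSq z + ((starRingEnd ℂ) β * z).re + γ < 0} ∨
    D = {z : ℂ | α * Complex.normSq z + ((starRingEnd ℂ) β * z).re + γ ≤ 0}

/-- `q_∘(D) = {u : q⁻¹(u) ⊆ D}`. -/
def innerImage (q : Polynomial ℂ) (D : Set ℂ) : Set ℂ :=
  {u : ℂ | ∀ z : ℂ, q.eval z = u → z ∈ D}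

/-- `S_{q,n}(f)(u₁,…,uₙ) = [f∘q, ∏ⱼ (q - uⱼ)]_{nd}`. -/
noncomputable def Sfun (q : Polynomial ℂ) (n : ℕ) (f : Polynomial ℂ) (u : Fin n → ℂ) : ℂ :=
  apol (n * q.natDegree) (f.comp q) (∏ j, (q - Polynomial.C (u j)))

/-- The Fischer inner product `⟨f,g⟩_n`. -/
noncomputable def fischer (n : ℕ) (f g : Polynomial ℂ) : ℂ :=
  ∑ k ∈ Finset.range (n + 1),
    ((n.choose k : ℂ))⁻¹ * f.coeff k * (starRingEnd ℂ) (g.coeff k)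

/-!
Takagi factorization: a symmetric complex bilinear form `B` on a finite-dimensional Hilbert space
is diagonal, with nonnegative entries, in some orthonormal basis. Write `B x y = ⟪S x, y⟫` with
`S` antilinear (Riesz). Then `S ∘ S` is complex linear, and for an eigenvector `u` its eigenvalue
is `‖S u‖² / ‖u‖² = r²`; so `g = S u + r u` (or `i u` if that vanishes) has `S g = r g`, its
orthogonal complement is `B`-orthogonal to it, and one inducts on the dimension.
For even `m` the apolarity form `[·,·]_m` is symmetric, and the theorem is the Takagi factorization
of `(x, y) ↦ [Φ x ∘ q, Φ y ∘ q]_{nd}`, where `Φ = fischerEmbedding n` sends the standard basis of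
`ℂⁿ⁺¹` to the Fischer-orthonormal basis `√(n choose k) zᵏ` of the polynomials of degree `≤ n`.
-/

open scoped InnerProductSpace ComplexConjugate
open Module

section TakagiFactorization

variable {E : Type*} [NormedAddCommGroup E] [InnerProductSpace ℂ E]

theorem exists_ne_zero_apply_eq_smul_of_apply_apply_eq (S : E →ₗ⋆[ℂ] E) {u : E} (hu : u ≠ 0)
    {r : ℝ} (h : S (S u) = ((r : ℂ) ^ 2) • u) : ∃ g ≠ 0, S g = (r : ℂ) • g := by
  by_cases hg : S u + (r : ℂ) • u = 0
  · refine ⟨Complex.I • u, smul_ne_zero Complex.I_ne_zero hu, ?_⟩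
    rw [map_smulₛₗ, eq_neg_of_add_eq_zero_left hg, starRingEnd_apply, Complex.star_def,
      Complex.conj_I, smul_neg, neg_smul, neg_neg, smul_comm]
  · refine ⟨S u + (r : ℂ) • u, hg, ?_⟩
    rw [map_add, map_smulₛₗ, h, Complex.conj_ofReal, smul_add, smul_smul, add_comm]
    ring_nf

theorem Orthonormal.fin_cons {m : ℕ} {f : E} {w : Fin m → E} (hw : Orthonormal ℂ w)
    (hf : ‖f‖ = 1) (hfw : ∀ j, ⟪f, w j⟫_ℂ = 0) : Orthonormal ℂ (Fin.cons f w : Fin (m + 1) → E) := by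
  refine ⟨Fin.cases hf hw.1, fun i j hij => ?_⟩
  induction i using Fin.cases with
  | zero =>
    induction j using Fin.cases with
    | zero => exact absurd rfl hij
    | succ j => exact hfw j
  | succ i =>
    induction j using Fin.cases with
    | zero => simpa [inner_eq_zero_symm] using hfw i
    | succ j => exact hw.2 (fun h => hij (congrArg Fin.succ h))

namespace LinearMap.BilinForm

variable [FiniteDimensional ℂ E]

noncomputable def rieszOp (B : LinearMap.BilinForm ℂ E) : E →ₗ⋆[ℂ] E :=
  (InnerProductSpace.toDual ℂ E).symm.toLinearEquiv.toLinearMap ∘ₛₗ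
    (LinearMap.toContinuousLinearMap.toLinearMap ∘ₗ B)

theorem inner_rieszOp_apply (B : LinearMap.BilinForm ℂ E) (x y : E) :
    ⟪B.rieszOp x, y⟫_ℂ = B x y := by
  simp [rieszOp]

theorem IsSymm.exists_norm_eq_one_apply_eq_mul_inner [Nontrivial E]
    {B : LinearMap.BilinForm ℂ E} (hB : B.IsSymm) :
    ∃ (f : E) (r : ℝ), ‖f‖ = 1 ∧ 0 ≤ r ∧ ∀ y, B f y = r * ⟪f, y⟫_ℂ := by
  set S := B.rieszOp
  obtain ⟨μ, hμ⟩ := Module.End.exists_eigenvalue (S ∘ₛₗ S)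
  obtain ⟨u, hu⟩ := hμ.exists_hasEigenvector
  have hSSu : S (S u) = μ • u := hu.apply_eq_smul
  have hu0 : (‖u‖ : ℂ) ≠ 0 := by simpa using hu.right
  -- `⟪u, S S u⟫ = conj ⟪S S u, u⟫ = conj (B (S u) u) = conj ⟪S u, S u⟫` by symmetry of `B`
  have hμ_norm : μ * (‖u‖ : ℂ) ^ 2 = (‖S u‖ : ℂ) ^ 2 := by
    calc μ * (‖u‖ : ℂ) ^ 2 = ⟪u, S (S u)⟫_ℂ := by
          rw [hSSu, inner_smul_right, inner_self_eq_norm_sq_to_K]; rfl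
      _ = (‖S u‖ : ℂ) ^ 2 := by
          rw [← inner_conj_symm, inner_rieszOp_apply, hB.eq, ← inner_rieszOp_apply,
            inner_self_eq_norm_sq_to_K]
          simp [S, ← Complex.ofReal_pow]
  set r : ℝ := ‖S u‖ / ‖u‖
  have hμr : μ = (r : ℂ) ^ 2 := by
    rw [Complex.ofReal_div, div_pow, ← hμ_norm]
    field_simp
  obtain ⟨g, hg, hSg⟩ := exists_ne_zero_apply_eq_smul_of_apply_apply_eq S hu.right
    (hSSu.trans (by rw [hμr]))
  refine ⟨(‖g‖⁻¹ : ℂ) • g, r, norm_smul_inv_norm hg, by positivity, fun y => ?_⟩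
  rw [← inner_rieszOp_apply, map_smulₛₗ, hSg, smul_comm, inner_smul_left, Complex.conj_ofReal,
    map_inv₀, Complex.conj_ofReal]

theorem IsSymm.exists_orthonormal_takagi {B : LinearMap.BilinForm ℂ E} (hB : B.IsSymm)
    {m : ℕ} (hm : finrank ℂ E = m) :
    ∃ (v : Fin m → E) (lam : Fin m → ℝ), Orthonormal ℂ v ∧ (∀ i, 0 ≤ lam i) ∧
      ∀ i j, B (v i) (v j) = if i = j then (lam i : ℂ) else 0 := by
  induction m generalizing E with
  | zero => exact ⟨finZeroElim, finZeroElim, ⟨finZeroElim, finZeroElim⟩, finZeroElim, finZeroElim⟩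
  | succ m ih =>
    have : Nontrivial E := Module.nontrivial_of_finrank_pos (R := ℂ) (by omega)
    have : Fact (finrank ℂ E = m + 1) := ⟨hm⟩
    obtain ⟨f, r, hf, hr, hBf⟩ := hB.exists_norm_eq_one_apply_eq_mul_inner
    set K := (ℂ ∙ f)ᗮ
    have hfK : ∀ x : K, ⟪f, x⟫_ℂ = 0 := fun x =>
      Submodule.inner_right_of_mem_orthogonal (Submodule.mem_span_singleton_self f) x.2
    obtain ⟨w, lam, hw, hlam, hBw⟩ := ih (hB.restrict K)
      (Submodule.finrank_orthogonal_span_singleton (norm_ne_zero_iff.mp (by simp [hf])))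
    refine ⟨Fin.cons f (K.subtype ∘ w), Fin.cons r lam,
      (hw.comp_linearIsometry K.subtypeₗᵢ).fin_cons hf fun j => hfK (w j),
      Fin.cases hr hlam, fun i j => ?_⟩
    induction i using Fin.cases with
    | zero =>
      induction j using Fin.cases with
      | zero => simp [hBf, hf]
      | succ j => simp [hBf, hfK, Fin.succ_ne_zero j |>.symm]
    | succ i =>
      induction j using Fin.cases with
      | zero => simp [← hB.eq f, hBf, hfK, Fin.succ_ne_zero i]
      | succ j => simpa [Fin.succ_inj] using hBw i j

end LinearMap.BilinForm

end TakagiFactorization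

theorem apol_comm {m : ℕ} (hm : Even m) (f g : ℂ[X]) : apol m f g = apol m g f := by
  unfold apol
  rw [← Finset.sum_range_reflect]
  refine Finset.sum_congr rfl fun k hk => ?_
  have hkm : k ≤ m := Nat.lt_succ_iff.mp (Finset.mem_range.mp hk)
  have hsign : (-1 : ℂ) ^ (m - k) = (-1) ^ k := by
    obtain ⟨j, rfl⟩ := hm
    rw [neg_one_pow_eq_pow_mod_two, neg_one_pow_eq_pow_mod_two (n := k)]
    congr 1
    omega
  rw [Nat.add_sub_cancel, Nat.sub_sub_self hkm, Nat.choose_symm hkm, hsign]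
  ring

noncomputable def apolForm (m : ℕ) : LinearMap.BilinForm ℂ ℂ[X] :=
  LinearMap.mk₂ ℂ (apol m)
    (fun f₁ f₂ g => by simp only [apol, coeff_add, mul_add, add_mul, Finset.sum_add_distrib])
    (fun c f g => by
      simp only [apol, coeff_smul, smul_eq_mul, Finset.mul_sum]
      exact Finset.sum_congr rfl fun _ _ => by ring)
    (fun f g₁ g₂ => by simp only [apol, coeff_add, mul_add, Finset.sum_add_distrib])
    (fun c f g => by
      simp only [apol, coeff_smul, smul_eq_mul, Finset.mul_sum]
      exact Finset.sum_congr rfl fun _ _ => by ring)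

theorem isSymm_apolForm {m : ℕ} (hm : Even m) : (apolForm m).IsSymm := ⟨apol_comm hm⟩

noncomputable def fischerEmbedding (n : ℕ) : EuclideanSpace ℂ (Fin (n + 1)) →ₗ[ℂ] ℂ[X] :=
  ∑ k : Fin (n + 1),
    (EuclideanSpace.proj k).toLinearMap.smulRight (monomial k (√(n.choose k) : ℂ))

theorem coeff_fischerEmbedding {n : ℕ} (x : EuclideanSpace ℂ (Fin (n + 1))) (k : Fin (n + 1)) :
    (fischerEmbedding n x).coeff k = x k * √(n.choose k) := by
  simp [fischerEmbedding, coeff_monomial, Fin.val_inj]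

theorem fischerEmbedding_mem_degreeLE {n : ℕ} (x : EuclideanSpace ℂ (Fin (n + 1))) :
    fischerEmbedding n x ∈ degreeLE ℂ n := by
  simp only [fischerEmbedding, LinearMap.sum_apply, LinearMap.smulRight_apply]
  refine Submodule.sum_mem _ fun k _ => Submodule.smul_mem _ _ ?_
  rw [mem_degreeLE]
  exact (degree_monomial_le _ _).trans (by exact_mod_cast k.is_le)

theorem fischer_fischerEmbedding {n : ℕ} (x y : EuclideanSpace ℂ (Fin (n + 1))) :
    fischer n (fischerEmbedding n x) (fischerEmbedding n y) = ⟪y, x⟫_ℂ := by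
  rw [fischer, ← Fin.sum_univ_eq_sum_range, PiLp.inner_apply]
  refine Finset.sum_congr rfl fun k _ => ?_
  have hchoose : (n.choose k : ℂ) ≠ 0 := Nat.cast_ne_zero.mpr (Nat.choose_pos k.is_le).ne'
  have hsqrt : (√(n.choose k) : ℂ) * √(n.choose k) = n.choose k := by
    rw [← Complex.ofReal_mul, Real.mul_self_sqrt (Nat.cast_nonneg _), Complex.ofReal_natCast]
  rw [coeff_fischerEmbedding, coeff_fischerEmbedding, map_mul, Complex.conj_ofReal,
    RCLike.inner_apply]
  field_simp
  linear_combination (x k * conj (y k)) * hsqrt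

theorem ker_fischerEmbedding (n : ℕ) : LinearMap.ker (fischerEmbedding n) = ⊥ := by
  refine LinearMap.ker_eq_bot'.mpr fun x hx => ?_
  have := fischer_fischerEmbedding x x
  rw [hx] at this
  simpa [fischer] using this.symm

theorem Polynomial.finrank_degreeLE (R : Type*) [CommRing R] [Nontrivial R] (n : ℕ) :
    finrank R (degreeLE R n) = n + 1 := by
  rw [← degreeLT_succ_eq_degreeLE, (degreeLTEquiv R (n + 1)).finrank_eq, finrank_fin_fun]

theorem range_fischerEmbedding (n : ℕ) : LinearMap.range (fischerEmbedding n) = degreeLE ℂ n := by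
  have : FiniteDimensional ℂ (degreeLE ℂ n) := .of_finrank_eq_succ (finrank_degreeLE ℂ n)
  refine Submodule.eq_of_le_of_finrank_le ?_ ?_
  · rintro _ ⟨x, rfl⟩
    exact fischerEmbedding_mem_degreeLE x
  · rw [LinearMap.finrank_range_of_inj (LinearMap.ker_eq_bot.mp (ker_fischerEmbedding n)),
      finrank_euclideanSpace_fin, finrank_degreeLE]

theorem stmt_17_general (d : ℕ) (hde : Even d) (q : Polynomial ℂ) (n : ℕ) :
    ∃ (f : Fin (n + 1) → Polynomial ℂ) (lam : Fin (n + 1) → ℝ),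
      (∀ i, (f i).degree ≤ (n : ℕ)) ∧
      LinearIndependent ℂ f ∧
      Submodule.span ℂ (Set.range f) = Polynomial.degreeLE ℂ (n : ℕ) ∧
      (∀ i, 0 ≤ lam i) ∧
      (∀ i j, fischer n (f i) (f j) = if i = j then 1 else 0) ∧
      (∀ i j, apol (n * d) ((f i).comp q) ((f j).comp q)
        = if i = j then (lam i : ℂ) else 0) := by
  set Φ := fischerEmbedding n
  set B : LinearMap.BilinForm ℂ _ :=
    (apolForm (n * d)).compl₁₂ ((aeval q).toLinearMap ∘ₗ Φ) ((aeval q).toLinearMap ∘ₗ Φ)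
  have hB : B.IsSymm := ⟨fun x y => (isSymm_apolForm (hde.mul_left n)).eq _ _⟩
  obtain ⟨v, lam, hv, hlam, hBv⟩ := hB.exists_orthonormal_takagi finrank_euclideanSpace_fin
  refine ⟨Φ ∘ v, lam, fun i => mem_degreeLE.mp (fischerEmbedding_mem_degreeLE (v i)),
    hv.linearIndependent.map' Φ (ker_fischerEmbedding n), ?_, hlam, fun i j => ?_, hBv⟩
  · rw [Set.range_comp, Submodule.span_image,
      hv.linearIndependent.span_eq_top_of_card_eq_finrank' (by simp), Submodule.map_top,
      range_fischerEmbedding]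
  · rw [Function.comp_apply, Function.comp_apply, fischer_fischerEmbedding,
      orthonormal_iff_ite.mp hv]
    exact if_congr eq_comm rfl rfl

/-- for q monic of even degree, there is a basis of ℂ[z]_n that is
orthonormal for the Fischer inner product and pairwise q-apolar. -/
theorem stmt_17 (d : ℕ) (hd : 2 ≤ d) (hde : Even d) (q : Polynomial ℂ) (hq : q.Monic)
    (hqd : q.natDegree = d) (n : ℕ) (hn : 1 ≤ n) :
    ∃ (f : Fin (n + 1) → Polynomial ℂ) (lam : Fin (n + 1) → ℝ),
      (∀ i, (f i).degree ≤ (n : ℕ)) ∧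
      LinearIndependent ℂ f ∧
      Submodule.span ℂ (Set.range f) = Polynomial.degreeLE ℂ (n : ℕ) ∧
      (∀ i, 0 ≤ lam i) ∧
      (∀ i j, fischer n (f i) (f j) = if i = j then 1 else 0) ∧
      (∀ i j, apol (n * d) ((f i).comp q) ((f j).comp q)
        = if i = j then (lam i : ℂ) else 0) :=
  stmt_17_general d hde q n
end

section
/- Let q be a monic complex polynomial of degree d ≥ 1, let n ≥ 1, let f be a complex polynomial of degree at most n, and let (u₁,…,uₙ) ∈ ℂⁿ. For each j ∈ {1,…,n}, let y_{j1}, …, y_{jd} ∈ ℂ be the zeros of q − uⱼ listed with multiplicity, i.e. q(z) − uⱼ = ∏_{k=1}^d (z − y_{jk}). Then Sym_{nd}(f∘q)(y₁₁,…,y_{nd}) = S_{q,n}(f)(u₁,…,uₙ), where the left-hand side is the symmetrization of f∘q in degree nd evaluated at the nd numbers y_{jk}. -/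
open Polynomial

/-- the restriction of Sym_{nd}(f∘q) to the fiber of
(q,…,q) over (u₁,…,uₙ) equals S_{q,n}(f)(u₁,…,uₙ). -/
theorem stmt_18 (d : ℕ) (hd : 1 ≤ d) (q : Polynomial ℂ) (hq : q.Monic)
    (hqd : q.natDegree = d) (n : ℕ) (hn : 1 ≤ n)
    (f : Polynomial ℂ) (hf : f.degree ≤ (n : ℕ))
    (u : Fin n → ℂ) (y : Fin n → Fin d → ℂ)
    (hy : ∀ j, q - Polynomial.C (u j) = ∏ k, (Polynomial.X - Polynomial.C (y j k))) :
    symFun (f.comp q) (fun p : Fin n × Fin d => y p.1 p.2) = Sfun q n f u := by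
  subst hqd
  have hprod : (∏ j, (q - Polynomial.C (u j))) =
      ∏ p : Fin n × Fin q.natDegree, (X - C (y p.1 p.2)) := by
    rw [Fintype.prod_prod_type]
    exact Finset.prod_congr rfl fun j _ => hy j
  have hcard : Fintype.card (Fin n × Fin q.natDegree) = n * q.natDegree := by simp
  rw [symFun, Sfun, apol, hcard]
  apply Finset.sum_congr rfl
  intro k hk
  have hk' : k ≤ n * q.natDegree := Nat.lt_succ_iff.mp (Finset.mem_range.mp hk)
  set s : Multiset ℂ :=
    Finset.univ.val.map (fun p : Fin n × Fin q.natDegree => y p.1 p.2) with hs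
  have hscard : Multiset.card s = n * q.natDegree := by simp [hs]
  have hcoeff : (∏ j, (q - Polynomial.C (u j))).coeff (n * q.natDegree - k)
      = (-1 : ℂ) ^ k * s.esymm k := by
    rw [hprod, Finset.prod, show
      (Finset.univ.val.map fun p : Fin n × Fin q.natDegree => X - C (y p.1 p.2))
        = s.map (fun r => X - C r) by rw [hs, Multiset.map_map]; rfl]
    rw [Multiset.prod_X_sub_C_coeff s (by omega)]
    rw [show Multiset.card s - (n * q.natDegree - k) = k by omega]
  have heval : MvPolynomial.eval (fun p : Fin n × Fin q.natDegree => y p.1 p.2)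
      (MvPolynomial.esymm _ ℂ k) = s.esymm k := by
    rw [hs, Finset.esymm_map_val]
    simp [MvPolynomial.esymm]
  rw [hcoeff, heval]
  have h1 : (-1 : ℂ) ^ k * (-1 : ℂ) ^ k = 1 := by
    rw [← mul_pow]; norm_num
  calc _ = ((-1:ℂ)^k * (-1:ℂ)^k) * ((((n * q.natDegree).choose k : ℂ))⁻¹ * (f.comp q).coeff k * s.esymm k) := by rw [h1]; ring
    _ = _ := by ring
end
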